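/- Let $m, m' \in \mathbb{Z}$ and $\varepsilon_a, \varepsilon_b \in \{0,1\}$. Suppose that for all $k, l \in \mathbb{N}$ and all $(x,\xi)$ with $\xi \neq 0$ one has $a_k(x,-\xi) = (-1)^{m-k+\varepsilon_a} a_k(x,\xi)$ and $b_l(x,-\xi) = (-1)^{m'-l+\varepsilon_b} b_l(x,\xi)$ (so $\varepsilon = 0$ is the odd-class condition and $\varepsilon = 1$ is the even-class condition). Then for every $j \in \mathbb{N}$, $c_j(x,-\xi) = (-1)^{m+m'-j+\varepsilon_a+\varepsilon_b} c_j(x,\xi)$ for all $x$ and $\xi \neq 0$. In particular, at the symbol level: odd∘odd and even∘even compositions are odd class, and mixed compositions are even class. -/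

import Mathlib

/-!
Composition of odd-class symbols is odd class (local symbol computation).
-/

noncomputable section

attribute [local instance]
  Matrix.linftyOpNormedAddCommGroup Matrix.linftyOpNormedRing Matrix.linftyOpNormedSpace

/-- First-order partial derivative in the `i`-th coordinate direction. -/
noncomputable def pderivDir {n : ℕ} {M : Type*} [NormedAddCommGroup M] [NormedSpace ℝ M]
    (i : Fin n) (g : (Fin n → ℝ) → M) : (Fin n → ℝ) → M :=
  fun x => fderiv ℝ g x (Pi.single i 1)

/-- Iterated partial derivative `∂^μ` associated to a multi-index `μ : Fin n → ℕ`. -/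
noncomputable def multiPDeriv {n : ℕ} {M : Type*} [NormedAddCommGroup M] [NormedSpace ℝ M]
    (μ : Fin n → ℕ) (g : (Fin n → ℝ) → M) : (Fin n → ℝ) → M :=
  (List.finRange n).foldr (fun i h => (pderivDir i)^[μ i] h) g

/-- The `j`-th homogeneous component of the composition of two classical symbols with
homogeneous components `a k` and `b l`:
`c j (x, ξ) = ∑_{|μ|+k+l=j} (1/μ!) ∂_ξ^μ a_k (x,ξ) · D_x^μ b_l (x,ξ)`,
where `D_x^μ = (-i)^{|μ|} ∂_x^μ`. -/
noncomputable def compSymbol {n N : ℕ}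
    (a b : ℕ → (Fin n → ℝ) → (Fin n → ℝ) → Matrix (Fin N) (Fin N) ℂ)
    (j : ℕ) (x ξ : Fin n → ℝ) : Matrix (Fin N) (Fin N) ℂ :=
  ∑ μ ∈ Finset.Iic (fun _ : Fin n => j), ∑ k ∈ Finset.range (j + 1),
    ∑ l ∈ Finset.range (j + 1),
      if (∑ i, μ i) + k + l = j then
        (((∏ i, Nat.factorial (μ i) : ℕ) : ℂ))⁻¹ •
          (multiPDeriv μ (a k x) ξ *
            ((-Complex.I) ^ (∑ i, μ i) • multiPDeriv μ (fun x' => b l x' ξ) x))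
      else 0


set_option linter.unusedSectionVars false
open scoped Topology

section Aux
variable {n : ℕ} {M : Type*} [NormedAddCommGroup M] [NormedSpace ℝ M]
  [Module ℂ M] [SMulCommClass ℝ ℂ M] [ContinuousConstSMul ℂ M]

lemma pderivDir_const_smul (i : Fin n) {c : ℂ} (hc : c ≠ 0) (g : (Fin n → ℝ) → M) :
    pderivDir i (fun y => c • g y) = fun x => c • pderivDir i g x := by
  funext x
  by_cases h : DifferentiableAt ℝ g x
  · simp [pderivDir, fderiv_fun_const_smul h c]
  · have h2 : ¬ DifferentiableAt ℝ (fun y => c • g y) x := by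
      intro h2
      have h3 := h2.fun_const_smul (c⁻¹)
      simp only [smul_smul, inv_mul_cancel₀ hc, one_smul] at h3
      exact h h3
    simp [pderivDir, fderiv_zero_of_not_differentiableAt h,
      fderiv_zero_of_not_differentiableAt h2]

lemma pderivDir_comp_neg (i : Fin n) (g : (Fin n → ℝ) → M) :
    pderivDir i (fun y => g (-y)) = fun x => -(pderivDir i g (-x)) := by
  funext x
  by_cases h : DifferentiableAt ℝ g (-x)
  · have hneg : DifferentiableAt ℝ (fun y : Fin n → ℝ => -y) x := differentiableAt_id.neg
    have hc : (fun y : Fin n → ℝ => g (-y)) = g ∘ (fun y => -y) := rfl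
    rw [pderivDir, hc, fderiv_comp x h hneg]
    have : fderiv ℝ (fun y : Fin n → ℝ => -y) x = -(ContinuousLinearMap.id ℝ (Fin n → ℝ)) := by
      rw [show (fun y : Fin n → ℝ => -y) = fun y => -(id y) from rfl, fderiv_fun_neg, fderiv_id]
    simp [pderivDir, this]
  · have h2 : ¬ DifferentiableAt ℝ (fun y => g (-y)) x := by
      intro h2
      have h2' : DifferentiableAt ℝ (fun y => g (-y)) (-(-x)) := by
        rw [neg_neg]; exact h2
      have h3 : DifferentiableAt ℝ ((fun y => g (-y)) ∘ (fun z : Fin n → ℝ => -z)) (-x) :=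
        h2'.comp (-x) differentiableAt_id.neg
      have h4 : DifferentiableAt ℝ g (-x) := by
        have he : ((fun y => g (-y)) ∘ (fun z : Fin n → ℝ => -z)) = g := by
          funext z; simp
        rwa [he] at h3
      exact h h4
    simp [pderivDir, fderiv_zero_of_not_differentiableAt h,
      fderiv_zero_of_not_differentiableAt h2]

/-- combined: iterate of a directional derivative on `c • g ∘ neg`. -/
lemma iter_pderivDir_smul_neg (i : Fin n) (k : ℕ) :
    ∀ (c : ℂ), c ≠ 0 → ∀ (g : (Fin n → ℝ) → M),
    (pderivDir i)^[k] (fun y => c • g (-y)) = fun x => ((-1 : ℂ) ^ k * c) • (pderivDir i)^[k] g (-x) := by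
  induction k with
  | zero => intro c hc g; simp
  | succ k ih =>
    intro c hc g
    rw [Function.iterate_succ_apply]
    have h1 : pderivDir i (fun y => c • g (-y)) = fun x => (-c) • (pderivDir i g) (-x) := by
      rw [pderivDir_const_smul i hc (fun y => g (-y)), pderivDir_comp_neg i g]
      funext x; simp [neg_smul, smul_neg]
    rw [h1, ih (-c) (neg_ne_zero.mpr hc) (pderivDir i g)]
    funext x
    rw [Function.iterate_succ_apply (pderivDir i) k g]
    have hcc : ((-1 : ℂ) ^ k * -c) = ((-1 : ℂ) ^ (k + 1) * c) := by ring
    rw [← hcc]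

lemma iter_pderivDir_smul (i : Fin n) (k : ℕ) :
    ∀ (c : ℂ), c ≠ 0 → ∀ (g : (Fin n → ℝ) → M),
    (pderivDir i)^[k] (fun y => c • g y) = fun x => c • (pderivDir i)^[k] g x := by
  induction k with
  | zero => intro c hc g; simp
  | succ k ih =>
    intro c hc g
    rw [Function.iterate_succ_apply, pderivDir_const_smul i hc g, ih c hc (pderivDir i g)]
    funext x
    rw [Function.iterate_succ_apply]

lemma foldr_smul_neg (μ : Fin n → ℕ) (L : List (Fin n)) :
    ∀ (c : ℂ), c ≠ 0 → ∀ (g : (Fin n → ℝ) → M),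
    L.foldr (fun i h => (pderivDir i)^[μ i] h) (fun y => c • g (-y))
      = fun x => ((-1 : ℂ) ^ ((L.map μ).sum) * c) •
          L.foldr (fun i h => (pderivDir i)^[μ i] h) g (-x) := by
  induction L with
  | nil => intro c hc g; simp
  | cons i L ih =>
    intro c hc g
    simp only [List.foldr_cons]
    rw [ih c hc g]
    have hc' : ((-1 : ℂ) ^ ((L.map μ).sum) * c) ≠ 0 :=
      mul_ne_zero (pow_ne_zero _ (by norm_num)) hc
    rw [iter_pderivDir_smul_neg i (μ i) _ hc' (L.foldr (fun i h => (pderivDir i)^[μ i] h) g)]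
    funext x
    have : ((-1 : ℂ) ^ (μ i) * ((-1 : ℂ) ^ ((L.map μ).sum) * c))
        = ((-1 : ℂ) ^ (((i :: L).map μ).sum) * c) := by
      rw [List.map_cons, List.sum_cons, pow_add]; ring
    rw [this]

lemma foldr_smul (μ : Fin n → ℕ) (L : List (Fin n)) :
    ∀ (c : ℂ), c ≠ 0 → ∀ (g : (Fin n → ℝ) → M),
    L.foldr (fun i h => (pderivDir i)^[μ i] h) (fun y => c • g y)
      = fun x => c • L.foldr (fun i h => (pderivDir i)^[μ i] h) g x := by
  induction L with
  | nil => intro c hc g; simp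
  | cons i L ih =>
    intro c hc g
    simp only [List.foldr_cons]
    rw [ih c hc g, iter_pderivDir_smul i (μ i) c hc]

lemma pderivDir_congr_on {U : Set (Fin n → ℝ)} (hU : IsOpen U) (i : Fin n)
    {g₁ g₂ : (Fin n → ℝ) → M} (h : ∀ y ∈ U, g₁ y = g₂ y) :
    ∀ y ∈ U, pderivDir i g₁ y = pderivDir i g₂ y := by
  intro y hy
  have hev : g₁ =ᶠ[𝓝 y] g₂ := Filter.eventuallyEq_of_mem (hU.mem_nhds hy) h
  simp only [pderivDir, hev.fderiv_eq]

lemma iter_pderivDir_congr_on {U : Set (Fin n → ℝ)} (hU : IsOpen U) (i : Fin n) (k : ℕ) :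
    ∀ {g₁ g₂ : (Fin n → ℝ) → M}, (∀ y ∈ U, g₁ y = g₂ y) →
    ∀ y ∈ U, (pderivDir i)^[k] g₁ y = (pderivDir i)^[k] g₂ y := by
  induction k with
  | zero => intro g₁ g₂ h; exact h
  | succ k ih =>
    intro g₁ g₂ h y hy
    rw [Function.iterate_succ_apply' (pderivDir i) k g₁,
      Function.iterate_succ_apply' (pderivDir i) k g₂]
    exact pderivDir_congr_on hU i (fun z hz => ih h z hz) y hy

lemma foldr_congr_on {U : Set (Fin n → ℝ)} (hU : IsOpen U) (μ : Fin n → ℕ)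
    (L : List (Fin n)) :
    ∀ {g₁ g₂ : (Fin n → ℝ) → M}, (∀ y ∈ U, g₁ y = g₂ y) →
    ∀ y ∈ U, L.foldr (fun i h => (pderivDir i)^[μ i] h) g₁ y
      = L.foldr (fun i h => (pderivDir i)^[μ i] h) g₂ y := by
  induction L with
  | nil => intro g₁ g₂ h; exact h
  | cons i L ih =>
    intro g₁ g₂ h y hy
    simp only [List.foldr_cons]
    exact iter_pderivDir_congr_on hU i (μ i) (fun z hz => ih h z hz) y hy

lemma multiPDeriv_smul_neg (μ : Fin n → ℕ) {c : ℂ} (hc : c ≠ 0) (g : (Fin n → ℝ) → M)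
    (x : Fin n → ℝ) :
    multiPDeriv μ (fun y => c • g (-y)) x = ((-1 : ℂ) ^ (∑ i, μ i) * c) • multiPDeriv μ g (-x) := by
  rw [multiPDeriv, foldr_smul_neg μ (List.finRange n) c hc g]
  rw [show ∑ i, μ i = ((List.finRange n).map μ).sum from Fin.sum_univ_def μ]
  rfl

lemma multiPDeriv_smul (μ : Fin n → ℕ) {c : ℂ} (hc : c ≠ 0) (g : (Fin n → ℝ) → M)
    (x : Fin n → ℝ) :
    multiPDeriv μ (fun y => c • g y) x = c • multiPDeriv μ g x := by
  rw [multiPDeriv, foldr_smul μ (List.finRange n) c hc g]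
  rfl

lemma multiPDeriv_congr_on {U : Set (Fin n → ℝ)} (hU : IsOpen U) (μ : Fin n → ℕ)
    {g₁ g₂ : (Fin n → ℝ) → M} (h : ∀ y ∈ U, g₁ y = g₂ y) {y : Fin n → ℝ} (hy : y ∈ U) :
    multiPDeriv μ g₁ y = multiPDeriv μ g₂ y :=
  foldr_congr_on hU μ (List.finRange n) h y hy

lemma neg_one_zpow_congr {p q : ℤ} (h : Even (p - q)) : (-1 : ℂ) ^ p = (-1 : ℂ) ^ q := by
  have h1 : (-1 : ℂ) ^ p = (-1 : ℂ) ^ (q + (p - q)) := by congr 1; ring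
  rw [h1, zpow_add₀ (by norm_num : (-1 : ℂ) ≠ 0), h.neg_one_zpow, mul_one]

end Aux

/-- parity of compositions.  If the homogeneous components of `a` (of order `m`)
have parity `(-1)^(m-k+εa)` and those of `b` (of order `m'`) have parity `(-1)^(m'-l+εb)`
(so `ε = 0` is the odd-class and `ε = 1` the even-class condition), then the components of
the composition have parity `(-1)^(m+m'-j+εa+εb)`.  In particular odd∘odd and even∘even are
odd class and mixed compositions are even class. -/
theorem compSymbol_parity_class (n N : ℕ) (hn : 1 ≤ n) (hN : 1 ≤ N) (m m' : ℤ)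
    (εa εb : ℤ) (hεa : εa = 0 ∨ εa = 1) (hεb : εb = 0 ∨ εb = 1)
    (a b : ℕ → (Fin n → ℝ) → (Fin n → ℝ) → Matrix (Fin N) (Fin N) ℂ)
    (ha_smooth : ∀ k, ContDiffOn ℝ (⊤ : ℕ∞)
      (fun p : (Fin n → ℝ) × (Fin n → ℝ) => a k p.1 p.2) {p | p.2 ≠ 0})
    (hb_smooth : ∀ l, ContDiffOn ℝ (⊤ : ℕ∞)
      (fun p : (Fin n → ℝ) × (Fin n → ℝ) => b l p.1 p.2) {p | p.2 ≠ 0})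
    (ha : ∀ (k : ℕ) (x ξ : Fin n → ℝ), ξ ≠ 0 →
      a k x (-ξ) = ((-1 : ℂ) ^ (m - (k : ℤ) + εa)) • a k x ξ)
    (hb : ∀ (l : ℕ) (x ξ : Fin n → ℝ), ξ ≠ 0 →
      b l x (-ξ) = ((-1 : ℂ) ^ (m' - (l : ℤ) + εb)) • b l x ξ)
    (j : ℕ) (x ξ : Fin n → ℝ) (hξ : ξ ≠ 0) :
    compSymbol a b j x (-ξ) = ((-1 : ℂ) ^ (m + m' - (j : ℤ) + εa + εb)) • compSymbol a b j x ξ := by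
  classical
  unfold compSymbol
  rw [Finset.smul_sum]
  refine Finset.sum_congr rfl ?_
  intro μ _
  rw [Finset.smul_sum]
  refine Finset.sum_congr rfl ?_
  intro k _
  rw [Finset.smul_sum]
  refine Finset.sum_congr rfl ?_
  intro l _
  by_cases hcond : (∑ i, μ i) + k + l = j
  · rw [if_pos hcond, if_pos hcond]
    set s := ∑ i, μ i with hs
    set ca := (-1 : ℂ) ^ (m - (k : ℤ) + εa) with hca_def
    set cb := (-1 : ℂ) ^ (m' - (l : ℤ) + εb) with hcb_def
    have hca : ca ≠ 0 := zpow_ne_zero _ (by norm_num)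
    have hcb : cb ≠ 0 := zpow_ne_zero _ (by norm_num)
    have hU : IsOpen {y : Fin n → ℝ | y ≠ 0} := isOpen_compl_singleton
    have hA : multiPDeriv μ (a k x) (-ξ) = ((-1 : ℂ) ^ s * ca) • multiPDeriv μ (a k x) ξ := by
      have h1 : multiPDeriv μ (fun y => a k x (-y)) ξ
          = ((-1 : ℂ) ^ s) • multiPDeriv μ (a k x) (-ξ) := by
        have := multiPDeriv_smul_neg μ (one_ne_zero) (a k x) ξ
        simpa using this
      have h2 : multiPDeriv μ (fun y => a k x (-y)) ξ
          = multiPDeriv μ (fun y => ca • a k x y) ξ :=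
        multiPDeriv_congr_on hU μ (fun y hy => ha k x y hy) hξ
      have h3 : multiPDeriv μ (fun y => ca • a k x y) ξ = ca • multiPDeriv μ (a k x) ξ :=
        multiPDeriv_smul μ hca _ ξ
      have h4 : ((-1 : ℂ) ^ s) • multiPDeriv μ (a k x) (-ξ) = ca • multiPDeriv μ (a k x) ξ := by
        rw [← h1, h2, h3]
      have hsq : ((-1 : ℂ) ^ s) * ((-1 : ℂ) ^ s) = 1 := by
        rw [← pow_add]
        exact Even.neg_one_pow ⟨s, rfl⟩
      calc multiPDeriv μ (a k x) (-ξ)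
          = ((-1 : ℂ) ^ s) • (((-1 : ℂ) ^ s) • multiPDeriv μ (a k x) (-ξ)) := by
            rw [smul_smul, hsq, one_smul]
        _ = ((-1 : ℂ) ^ s) • (ca • multiPDeriv μ (a k x) ξ) := by rw [h4]
        _ = ((-1 : ℂ) ^ s * ca) • multiPDeriv μ (a k x) ξ := by rw [smul_smul]
    have hB : multiPDeriv μ (fun x' => b l x' (-ξ)) x
        = cb • multiPDeriv μ (fun x' => b l x' ξ) x := by
      have he : (fun x' => b l x' (-ξ)) = fun x' => cb • b l x' ξ := by
        funext x'; exact hb l x' ξ hξ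
      rw [he]
      exact multiPDeriv_smul μ hcb _ x
    rw [hA, hB]
    have h5 : (-1 : ℂ) ^ s * ca * cb = (-1 : ℂ) ^ (m + m' - (j : ℤ) + εa + εb) := by
      rw [hca_def, hcb_def]
      rw [show ((-1 : ℂ) ^ s) = (-1 : ℂ) ^ (s : ℤ) from (zpow_natCast _ _).symm]
      rw [← zpow_add₀ (by norm_num : (-1 : ℂ) ≠ 0),
        ← zpow_add₀ (by norm_num : (-1 : ℂ) ≠ 0)]
      refine neg_one_zpow_congr ?_
      have : (s : ℤ) + k + l = (j : ℤ) := by exact_mod_cast hcond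
      refine ⟨(j : ℤ) - k - l, by omega⟩
    simp only [smul_mul_assoc, mul_smul_comm, smul_smul]
    congr 1
    rw [← h5]
    ring
  · rw [if_neg hcond, if_neg hcond, smul_zero]
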